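/- arXiv:2307.14815 — 2 statements merged into one kernel-verified Lean document; each statement's English description precedes it below -/
import Mathlib

section
/- Every Hahn-Banach (norm-preserving) extension to M of a relatively weak*-continuous functional on an F & M Riesz subspace A of M is normal. -/
/-- GW1: Every Hahn-Banach (norm-preserving) extension to `M` of a
relatively weak*-continuous functional on an F & M Riesz subspace `A` of a
von Neumann algebra `M` is normal. -/
theorem fm_riesz_hahn_banach_extension_normal
    {M : Type*} [NormedRing M] [NormedAlgebra ℂ M] [StarRing M]
    (Normal Singular : (M →L[ℂ] ℂ) → Prop)
    (hdec : ∀ φ : M →L[ℂ] ℂ, ∃ φn φs : M →L[ℂ] ℂ,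
      Normal φn ∧ Singular φs ∧ φ = φn + φs ∧ ‖φ‖ = ‖φn‖ + ‖φs‖)
    (hdecu : ∀ φn φs φn' φs' : M →L[ℂ] ℂ, Normal φn → Singular φs →
      Normal φn' → Singular φs' → φn + φs = φn' + φs' → φn = φn' ∧ φs = φs')
    (hNsub : ∀ φ ψ, Normal φ → Normal ψ → Normal (φ - ψ))
    (hSneg : ∀ φ, Singular φ → Singular (-φ))
    (A : Submodule ℂ M)
    (hFM : ∀ φ φn φs : M →L[ℂ] ℂ, Normal φn → Singular φs → φ = φn + φs →
      (∀ a ∈ A, φ a = 0) → (∀ a ∈ A, φn a = 0) ∧ (∀ a ∈ A, φs a = 0))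
    -- ω is a relatively weak* continuous functional on A: the restriction of a
    -- normal functional ν on M
    (ν : M →L[ℂ] ℂ) (hν : Normal ν)
    -- φ is a Hahn-Banach extension of ω = ν|_A
    (φ : M →L[ℂ] ℂ) (hext : ∀ a ∈ A, φ a = ν a)
    (hnorm : ‖φ‖ = ‖ν.comp A.subtypeL‖) :
    Normal φ := by
  obtain ⟨φn, φs, hφn, hφs, hsum, hnadd⟩ := hdec φ
  have hvan : ∀ a ∈ A, (φ - ν) a = 0 := by
    intro a ha
    simp [ContinuousLinearMap.sub_apply, hext a ha]
  have hdecomp : φ - ν = (φn - ν) + φs := by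
    rw [hsum]; abel
  obtain ⟨hn0, hs0⟩ := hFM (φ - ν) (φn - ν) φs (hNsub φn ν hφn hν) hφs hdecomp hvan
  have hagree : ν.comp A.subtypeL = φn.comp A.subtypeL := by
    ext a
    have := hn0 a a.2
    simp only [ContinuousLinearMap.sub_apply] at this
    simpa [ContinuousLinearMap.comp_apply, eq_comm] using sub_eq_zero.mp this
  have hle : ‖ν.comp A.subtypeL‖ ≤ ‖φn‖ := by
    rw [hagree]
    calc ‖φn.comp A.subtypeL‖ ≤ ‖φn‖ * ‖A.subtypeL‖ := ContinuousLinearMap.opNorm_comp_le _ _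
      _ ≤ ‖φn‖ * 1 := by
          gcongr
          exact ContinuousLinearMap.opNorm_le_bound _ zero_le_one (by simp)
      _ = ‖φn‖ := mul_one _
  have hφs0 : ‖φs‖ = 0 := by
    rw [hnorm] at hnadd
    linarith [norm_nonneg φs]
  have : φs = 0 := norm_eq_zero.mp hφs0
  rw [hsum, this, add_zero]
  exact hφn
end

section
/- If A is an F & M Riesz subspace of a von Neumann algebra M with A + A* weak* dense in M, then every normal functional on M is the unique Hahn-Banach extension of its restriction to A + A*; in particular every normal functional is normed by A + A* (its norm is attained as the supremum over the unit ball of A + A*). -/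
/-- If `A` is an F & M Riesz subspace of a von Neumann algebra `M`
with `A + A*` weak* dense, then every normal functional `ν` on `M` is the unique
Hahn-Banach extension of its restriction to `A + A*`; in particular `ν` is
normed by `A + A*` (i.e. `‖ν‖ = ‖ν|_{A+A*}‖`). -/
theorem normal_functional_unique_hahn_banach_extension
    {M : Type*} [NormedRing M] [NormedAlgebra ℂ M] [StarRing M]
    (Normal Singular : (M →L[ℂ] ℂ) → Prop)
    (hdec : ∀ φ : M →L[ℂ] ℂ, ∃ φn φs : M →L[ℂ] ℂ,
      Normal φn ∧ Singular φs ∧ φ = φn + φs ∧ ‖φ‖ = ‖φn‖ + ‖φs‖)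
    (hdecu : ∀ φn φs φn' φs' : M →L[ℂ] ℂ, Normal φn → Singular φs →
      Normal φn' → Singular φs' → φn + φs = φn' + φs' → φn = φn' ∧ φs = φs')
    (A : Submodule ℂ M)
    (hFM : ∀ φ φn φs : M →L[ℂ] ℂ, Normal φn → Singular φs → φ = φn + φs →
      (∀ a ∈ A, φ a = 0) → (∀ a ∈ A, φn a = 0) ∧ (∀ a ∈ A, φs a = 0))
    (hFMstar : ∀ φ φn φs : M →L[ℂ] ℂ, Normal φn → Singular φs → φ = φn + φs →
      (∀ a ∈ A, φ (star a) = 0) →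
      (∀ a ∈ A, φn (star a) = 0) ∧ (∀ a ∈ A, φs (star a) = 0))
    (hdense : ∀ φ : M →L[ℂ] ℂ, Normal φ →
      (∀ a ∈ A, φ a = 0 ∧ φ (star a) = 0) → φ = 0)
    -- S is the subspace A + A*
    (S : Submodule ℂ M)
    (hS : S = Submodule.span ℂ ((A : Set M) ∪ star '' (A : Set M)))
    (ν : M →L[ℂ] ℂ) (hν : Normal ν) :
    (‖ν‖ = ‖ν.comp S.subtypeL‖) ∧
    (∀ φ : M →L[ℂ] ℂ, (∀ s ∈ S, φ s = ν s) → ‖φ‖ = ‖ν.comp S.subtypeL‖ →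
      φ = ν) := by
  -- membership facts
  have hmem : ∀ a ∈ A, a ∈ S ∧ star a ∈ S := by
    intro a ha
    refine ⟨?_, ?_⟩
    · rw [hS]; exact Submodule.subset_span (Or.inl ha)
    · rw [hS]; exact Submodule.subset_span (Or.inr ⟨a, ha, rfl⟩)
  -- key: any functional annihilating S is singular
  have key : ∀ φ : M →L[ℂ] ℂ, (∀ s ∈ S, φ s = 0) →
      ∃ ψs : M →L[ℂ] ℂ, Singular ψs ∧ φ = ψs := by
    intro φ hann
    obtain ⟨φn, φs, hn, hs, heq, -⟩ := hdec φ
    have h1 := hFM φ φn φs hn hs heq (fun a ha => hann a (hmem a ha).1)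
    have h2 := hFMstar φ φn φs hn hs heq (fun a ha => hann (star a) (hmem a ha).2)
    have hn0 : φn = 0 := hdense φn hn (fun a ha => ⟨h1.1 a ha, h2.1 a ha⟩)
    exact ⟨φs, hs, by rw [heq, hn0, zero_add]⟩
  -- the restriction has norm ≤ ‖ν‖
  have hres : ‖ν.comp S.subtypeL‖ ≤ ‖ν‖ := by
    apply ContinuousLinearMap.opNorm_le_bound _ (norm_nonneg ν)
    intro x
    exact ν.le_opNorm (x : M)
  -- first part
  have part1 : ‖ν‖ = ‖ν.comp S.subtypeL‖ := by
    obtain ⟨g, hg, hgnorm⟩ := exists_extension_norm_eq S (ν.comp S.subtypeL)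
    have hann : ∀ s ∈ S, (g - ν) s = 0 := by
      intro s hs
      have := hg ⟨s, hs⟩
      simp only [ContinuousLinearMap.coe_comp', Function.comp_apply,
        Submodule.coe_subtypeL', Submodule.coe_subtype] at this
      simp [ContinuousLinearMap.sub_apply, this]
    obtain ⟨ψs, hψ, heq⟩ := key (g - ν) hann
    have hg2 : g = ν + ψs := by
      have : g - ν = ψs := heq
      rw [← this]; abel
    obtain ⟨gn, gs, hgn, hgs, hge, hgnorms⟩ := hdec g
    have huniq := hdecu gn gs ν ψs hgn hgs hν hψ (by rw [← hge, hg2])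
    have : ‖ν‖ ≤ ‖g‖ := by
      rw [hgnorms, huniq.1]
      have := norm_nonneg gs
      linarith
    rw [hgnorm] at this
    exact le_antisymm this hres
  refine ⟨part1, ?_⟩
  -- second part
  intro φ hφS hφnorm
  have hann : ∀ s ∈ S, (φ - ν) s = 0 := by
    intro s hs
    simp [ContinuousLinearMap.sub_apply, hφS s hs]
  obtain ⟨ψs, hψ, heq⟩ := key (φ - ν) hann
  have hφ2 : φ = ν + ψs := by
    have : φ - ν = ψs := heq
    rw [← this]; abel
  obtain ⟨φn, φs, hφn, hφs, hφe, hφnorms⟩ := hdec φ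
  have huniq := hdecu φn φs ν ψs hφn hφs hν hψ (by rw [← hφe, hφ2])
  have hψ0 : ψs = 0 := by
    have h1 : ‖φ‖ = ‖ν‖ + ‖ψs‖ := by rw [hφnorms, huniq.1, huniq.2]
    have h2 : ‖φ‖ = ‖ν‖ := by rw [hφnorm, ← part1]
    have : ‖ψs‖ = 0 := by linarith
    exact norm_eq_zero.mp this
  rw [hφ2, hψ0, add_zero]
end
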